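/- arXiv:1810.07560 — 10 statements merged into one kernel-verified Lean document; each statement's English description precedes it below -/
import Mathlib

section
/- For every positive integer n and every integer-valued polynomial P of degree at most n, the polynomial lcm(1,2,...,n)·P' is also integer-valued (of degree at most n). -/
/-!
Newton's expansion `P(x + X) = ∑ₖ Δᵏ P(x) · binom(X, k)` together with
`binom(X, k)'(0) = (-1)^(k-1) / k` gives `P'(x) = ∑_{k=1}^n (-1)^(k-1) Δᵏ P(x) / k` when
`deg P ≤ n`. At an integer `x` the forward differences of an integer-valued `P` are integers, and
every `k ≤ n` divides `lcm(1, …, n)`.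
-/

open Polynomial

/-- A polynomial `P ∈ ℚ[X]` is integer-valued if it takes integer values at all integers. -/
def IntValued (P : Polynomial ℚ) : Prop := ∀ m : ℤ, ∃ z : ℤ, P.eval (m : ℚ) = (z : ℚ)

open Finset Nat fwdDiff

namespace Polynomial

theorem derivative_descPochhammer_succ_eval_zero {R : Type*} [CommRing R] (k : ℕ) :
    (derivative (descPochhammer R (k + 1))).eval 0 = (-1) ^ k * k ! := by
  induction k with
  | zero => simp [descPochhammer_one]
  | succ k ih =>
    rw [descPochhammer_succ_right, derivative_mul, eval_add, eval_mul, eval_mul, ih,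
      descPochhammer_ne_zero_eval_zero (R := R) k.succ_ne_zero, factorial_succ]
    simp only [derivative_sub, derivative_X, derivative_natCast, eval_sub, eval_X, eval_natCast,
      eval_one]
    push_cast
    ring

variable (K : Type*) [Field K]

noncomputable def binomialPoly (k : ℕ) : K[X] := C (k ! : K)⁻¹ * descPochhammer K k

variable {K}

@[simp]
theorem binomialPoly_zero : binomialPoly K 0 = 1 := by simp [binomialPoly]

variable [CharZero K]

theorem eval_natCast_binomialPoly (j k : ℕ) : (binomialPoly K k).eval (j : K) = j.choose k := by
  rw [binomialPoly, eval_mul, eval_C, cast_choose_eq_descPochhammer_div, inv_mul_eq_div]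

theorem derivative_binomialPoly_succ_eval_zero (k : ℕ) :
    (derivative (binomialPoly K (k + 1))).eval 0 = (-1) ^ k / (k + 1) := by
  rw [binomialPoly, derivative_C_mul, eval_mul, eval_C, derivative_descPochhammer_succ_eval_zero,
    factorial_succ]
  have : (k ! : K) ≠ 0 := by exact_mod_cast k.factorial_ne_zero
  push_cast
  field_simp

theorem comp_X_add_C_eq_sum_fwdDiff {P : K[X]} {n : ℕ} (hP : P.natDegree ≤ n) (x : K) :
    P.comp (X + C x) = ∑ k ∈ range (n + 1), C (Δ_[1] ^[k] P.eval x) * binomialPoly K k := by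
  refine eq_of_infinite_eval_eq _ _ <| Set.infinite_of_injective_forall_mem
    Nat.cast_injective fun j : ℕ ↦ ?_
  simp only [Set.mem_ofPred_eq, eval_comp, eval_add, eval_X, eval_C, eval_finsetSum, eval_mul,
    eval_natCast_binomialPoly]
  calc P.eval (j + x) = ∑ k ∈ range (j + 1), j.choose k • Δ_[1] ^[k] P.eval x := by
        rw [add_comm, ← shift_eq_sum_fwdDiff_iter, nsmul_one]
    _ = ∑ k ∈ range (n + j + 1), j.choose k • Δ_[1] ^[k] P.eval x :=
        sum_subset (range_subset_range.mpr (by omega)) fun k _ hkj ↦ by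
          simp [choose_eq_zero_of_lt (by simpa using hkj : j < k)]
    _ = ∑ k ∈ range (n + 1), Δ_[1] ^[k] P.eval x * j.choose k := by
        refine (sum_subset (range_subset_range.mpr (by omega)) fun k _ hkn ↦ ?_).symm.trans
          (sum_congr rfl fun k _ ↦ by rw [nsmul_eq_mul, mul_comm])
        rw [fwdDiff_iter_eq_zero_of_degree_lt (by rw [mem_range] at hkn; omega)]
        simp

theorem derivative_eval_eq_sum_fwdDiff {P : K[X]} {n : ℕ} (hP : P.natDegree ≤ n) (x : K) :
    (derivative P).eval x = ∑ k ∈ range n, (-1) ^ k / (k + 1) * Δ_[1] ^[k + 1] P.eval x := by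
  have hshift : (derivative P).eval x = (derivative (P.comp (X + C x))).eval 0 := by
    simp [derivative_comp, eval_comp]
  rw [hshift, comp_X_add_C_eq_sum_fwdDiff hP, derivative_sum, eval_finsetSum, sum_range_succ']
  simp [derivative_binomialPoly_succ_eval_zero, mul_comm]

end Polynomial

theorem fwdDiff_iter_intCast_mem_bot {R : Type*} [Ring R] {f : R → R}
    (hf : ∀ m : ℤ, f m ∈ (⊥ : Subring R)) (k : ℕ) (m : ℤ) :
    Δ_[1] ^[k] f m ∈ (⊥ : Subring R) := by
  induction k generalizing m with
  | zero => exact hf m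
  | succ k ih =>
    rw [Function.iterate_succ_apply', fwdDiff]
    exact sub_mem (by exact_mod_cast ih (m + 1)) (ih m)

theorem natCast_div_mem_bot {K : Type*} [DivisionRing K] [CharZero K] {a b : ℕ} (h : b ∣ a) :
    (a : K) / b ∈ (⊥ : Subring K) :=
  Subring.mem_bot.mpr ⟨(a / b : ℕ), by rw [Int.cast_natCast, Nat.cast_div_charZero h]⟩

theorem intValued_iff_forall_mem_bot {P : ℚ[X]} :
    IntValued P ↔ ∀ m : ℤ, P.eval (m : ℚ) ∈ (⊥ : Subring ℚ) := by
  simp only [IntValued, Subring.mem_bot, eq_comm]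

theorem lcm_mul_derivative_intValued_general (n : ℕ)
    (P : Polynomial ℚ) (hP : IntValued P) (hdeg : P.natDegree ≤ n) :
    IntValued (C (((Finset.Icc 1 n).lcm id : ℕ) : ℚ) * derivative P) ∧
      (C (((Finset.Icc 1 n).lcm id : ℕ) : ℚ) * derivative P).natDegree ≤ n := by
  refine ⟨intValued_iff_forall_mem_bot.mpr fun m ↦ ?_, ?_⟩
  · rw [eval_mul, eval_C, derivative_eval_eq_sum_fwdDiff hdeg, mul_sum]
    refine Subring.sum_mem _ fun k hk ↦ ?_
    have hdvd : k + 1 ∣ (Finset.Icc 1 n).lcm id :=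
      Finset.dvd_lcm (f := id) (mem_Icc.mpr ⟨k.succ_pos, mem_range.mp hk⟩)
    rw [← mul_assoc, mul_div_left_comm]
    exact mul_mem (mul_mem (pow_mem (neg_mem (one_mem _)) _)
      (by rw [← Nat.cast_succ]; exact natCast_div_mem_bot hdvd))
      (fwdDiff_iter_intCast_mem_bot (intValued_iff_forall_mem_bot.mp hP) _ m)
  · exact (natDegree_C_mul_le _ _).trans <| (natDegree_derivative_le P).trans (by omega)

theorem lcm_mul_derivative_intValued (n : ℕ) (hn : 0 < n)
    (P : Polynomial ℚ) (hP : IntValued P) (hdeg : P.natDegree ≤ n) :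
    IntValued (C (((Finset.Icc 1 n).lcm id : ℕ) : ℚ) * derivative P) ∧
      (C (((Finset.Icc 1 n).lcm id : ℕ) : ℚ) * derivative P).natDegree ≤ n :=
  lcm_mul_derivative_intValued_general n P hP hdeg
end

section
/- For every positive integer n, (1/n)·∑_{k=0}^{n-1} 1/|B_n'(k)| = 2^{n-1}, where B_n(X) = X(X-1)⋯(X-n+1)/n!. -/
open Polynomial Finset

lemma nat_prod1 (k : ℕ) : ∏ i ∈ range k, (k - i) = k.factorial := by
  rw [← Finset.prod_range_reflect, ← Finset.prod_range_add_one_eq_factorial]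
  apply Finset.prod_congr rfl
  intro j hj
  simp at hj
  omega

lemma eval_deriv_prod (n k : ℕ) (hk : k ∈ Finset.range n) :
    (derivative (∏ i ∈ Finset.range n, (X - C (i : ℚ)))).eval (k:ℚ) =
      ∏ i ∈ (Finset.range n).erase k, ((k : ℚ) - i) := by
  have hprod : (∏ i ∈ Finset.range n, (X - C (i : ℚ))) =
      (Multiset.map (fun a => X - C a) ((Finset.range n).val.map (Nat.cast : ℕ → ℚ))).prod := by
    rw [Multiset.map_map]; rfl
  have hmem : (k:ℚ) ∈ (Finset.range n).val.map (Nat.cast : ℕ → ℚ) :=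
    Multiset.mem_map_of_mem _ hk
  rw [hprod, eval_multiset_prod_X_sub_C_derivative hmem]
  rw [← Multiset.map_erase _ Nat.cast_injective, Multiset.map_map]
  rfl

lemma prod_abs_erase (n k : ℕ) (hk : k < n) :
    |∏ i ∈ (Finset.range n).erase k, ((k : ℚ) - i)| =
      (k.factorial : ℚ) * ((n - 1 - k).factorial : ℚ) := by
  have hsplit : (Finset.range n).erase k = Finset.range k ∪ Finset.Ico (k+1) n := by
    ext i; simp [Finset.mem_erase, Finset.mem_range, Finset.mem_Ico]; omega
  have hdisj : Disjoint (Finset.range k) (Finset.Ico (k+1) n) := by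
    simp [Finset.disjoint_left, Finset.mem_range, Finset.mem_Ico]; omega
  rw [Finset.abs_prod, hsplit, Finset.prod_union hdisj]
  have h1 : ∏ i ∈ Finset.range k, |(k : ℚ) - i| = (k.factorial : ℚ) := by
    rw [← nat_prod1 k]
    push_cast
    apply Finset.prod_congr rfl
    intro i hi
    simp at hi
    rw [abs_of_nonneg]
    · push_cast [Nat.cast_sub hi.le]; ring
    · have : (i:ℚ) < k := by exact_mod_cast hi
      linarith
  have h2 : ∏ i ∈ Finset.Ico (k+1) n, |(k : ℚ) - i| = ((n - 1 - k).factorial : ℚ) := by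
    rw [Finset.prod_Ico_eq_prod_range,
      ← Finset.prod_range_add_one_eq_factorial (n - 1 - k)]
    have h3 : n - (k+1) = n - 1 - k := by omega
    rw [h3]
    push_cast
    apply Finset.prod_congr rfl
    intro j hj
    rw [abs_of_nonpos]
    · ring
    · have : (0:ℚ) ≤ (j:ℚ) + 1 := by positivity
      linarith
  rw [h1, h2]

/-- The binomial coefficient polynomial `B_n(X) = X(X-1)⋯(X-n+1)/n!` in `ℚ[X]`. -/
noncomputable def B (n : ℕ) : Polynomial ℚ :=
  C (1 / (n.factorial : ℚ)) * ∏ i ∈ Finset.range n, (X - C (i : ℚ))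

theorem sum_inv_abs_derivative_B (n : ℕ) (hn : 0 < n) :
    (1 / (n : ℚ)) * ∑ k ∈ Finset.range n, 1 / |(derivative (B n)).eval (k : ℚ)| =
      2 ^ (n - 1) := by
  obtain ⟨m, rfl⟩ : ∃ m, n = m + 1 := ⟨n - 1, by omega⟩
  have hterm : ∀ k ∈ Finset.range (m + 1),
      1 / |(derivative (B (m + 1))).eval (k : ℚ)| = ((m + 1 : ℕ) : ℚ) * (m.choose k : ℚ) := by
    intro k hk
    have hkm : k ≤ m := by simpa [Nat.lt_succ_iff] using hk
    rw [B, derivative_C_mul, eval_C_mul, eval_deriv_prod _ _ hk, abs_mul,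
      prod_abs_erase _ _ (Finset.mem_range.mp hk)]
    have h1 : |(1 / ((m+1).factorial : ℚ))| = 1 / ((m+1).factorial : ℚ) := by
      rw [abs_of_pos]; positivity
    rw [h1]
    have h2 : m + 1 - 1 - k = m - k := by omega
    rw [h2, Nat.cast_choose ℚ hkm]
    have hf : ((m+1).factorial : ℚ) = ((m+1 : ℕ) : ℚ) * (m.factorial : ℚ) := by
      rw [Nat.factorial_succ]; push_cast; ring
    rw [hf]
    have h3 : (k.factorial : ℚ) ≠ 0 := by positivity
    have h4 : ((m - k).factorial : ℚ) ≠ 0 := by positivity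
    have h5 : (m.factorial : ℚ) ≠ 0 := by positivity
    field_simp
  rw [Finset.sum_congr rfl hterm, ← Finset.mul_sum, ← Nat.cast_sum, Nat.sum_range_choose]
  have : ((m:ℚ) + 1) ≠ 0 := by positivity
  push_cast
  field_simp
end

section
/- For every positive integer n and every k ∈ {0, 1, ..., n-1}, the value of the derivative of B_n(X) = X(X-1)⋯(X-n+1)/n! at k equals (-1)^{n-k-1} · k!(n-k-1)!/n!. -/
open Polynomial

lemma prod_erase_eval (n k : ℕ) (hk : k < n) :
    ∏ i ∈ (Finset.range n).erase k, ((k : ℚ) - (i : ℚ)) =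
      (-1) ^ (n - k - 1) * ((k.factorial : ℚ) * ((n - k - 1).factorial : ℚ)) := by
  have hsplit : (Finset.range n).erase k = Finset.range k ∪ Finset.Ico (k+1) n := by
    ext x
    simp [Finset.mem_erase, Finset.mem_range, Finset.mem_Ico]
    omega
  have hdisj : Disjoint (Finset.range k) (Finset.Ico (k+1) n) := by
    rw [Finset.disjoint_left]
    intro a ha hb
    simp [Finset.mem_range] at ha
    simp [Finset.mem_Ico] at hb
    omega
  rw [hsplit, Finset.prod_union hdisj]
  have h1 : ∏ i ∈ Finset.range k, ((k : ℚ) - (i : ℚ)) = (k.factorial : ℚ) := by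
    rw [← Finset.prod_range_reflect (fun i => ((k : ℚ) - (i : ℚ))) k]
    have : ∀ j ∈ Finset.range k, ((k : ℚ) - ((k - 1 - j : ℕ) : ℚ)) = (((j + 1 : ℕ)) : ℚ) := by
      intro j hj
      simp only [Finset.mem_range] at hj
      rw [Nat.sub_sub, Nat.cast_sub (by omega : 1 + j ≤ k)]
      push_cast; ring
    rw [Finset.prod_congr rfl this, ← Nat.cast_prod,
      Finset.prod_range_add_one_eq_factorial]
  have h2 : ∏ i ∈ Finset.Ico (k+1) n, ((k : ℚ) - (i : ℚ)) =
      (-1) ^ (n - k - 1) * ((n - k - 1).factorial : ℚ) := by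
    rw [Finset.prod_Ico_eq_prod_range]
    have : ∀ i, ((k : ℚ) - ((k + 1 + i : ℕ) : ℚ)) = (-1) * ((i : ℚ) + 1) := by
      intro i; push_cast; ring
    rw [Finset.prod_congr rfl (fun i _ => this i), Finset.prod_mul_distrib,
      Finset.prod_const]
    rw [Finset.card_range, show n - (k+1) = n - k - 1 from by omega]
    congr 1
    have : ∀ x ∈ Finset.range (n - (k+1)), ((x : ℚ) + 1) = (((x + 1 : ℕ)) : ℚ) := by
      intro x _; push_cast; ring
    rw [show n - k - 1 = n - (k+1) from by omega, Finset.prod_congr rfl this, ← Nat.cast_prod,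
      Finset.prod_range_add_one_eq_factorial]
  rw [h1, h2]; ring

lemma poly_deriv_finset_prod {s : Finset ℕ} {f : ℕ → Polynomial ℚ} :
    derivative (∏ i ∈ s, f i) = ∑ i ∈ s, (∏ j ∈ s.erase i, f j) * derivative (f i) := by
  classical
  induction s using Finset.induction_on with
  | empty => simp
  | @insert a s ha ih =>
    rw [Finset.prod_insert ha, derivative_mul, ih, Finset.sum_insert ha,
      Finset.erase_insert ha, Finset.mul_sum]
    congr 1
    · ring
    refine Finset.sum_congr rfl fun i hi => ?_
    have hia : i ≠ a := fun h => ha (h ▸ hi)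
    rw [Finset.erase_insert_of_ne hia.symm,
      Finset.prod_insert (fun h => ha (Finset.mem_of_mem_erase h))]
    ring

theorem derivative_B_eval (n : ℕ) (hn : 0 < n) (k : ℕ) (hk : k < n) :
    (derivative (B n)).eval (k : ℚ) =
      (-1) ^ (n - k - 1) * ((k.factorial : ℚ) * ((n - k - 1).factorial : ℚ)) /
        (n.factorial : ℚ) := by
  unfold B
  rw [derivative_mul, derivative_C, zero_mul, zero_add, poly_deriv_finset_prod]
  rw [eval_mul, eval_C]
  rw [eval_finset_sum]
  rw [Finset.sum_eq_single k]
  · simp only [derivative_sub, derivative_X, derivative_C, sub_zero, mul_one, eval_mul,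
      eval_prod, eval_sub, eval_X, eval_C, eval_one]
    rw [prod_erase_eval n k hk]
    ring
  · intro b hb hbk
    simp only [eval_mul, eval_prod, eval_sub, eval_X, eval_C]
    apply mul_eq_zero_of_left
    apply Finset.prod_eq_zero (Finset.mem_erase.mpr ⟨(Ne.symm hbk), Finset.mem_range.mpr hk⟩)
    simp
  · intro h
    exact absurd (Finset.mem_range.mpr hk) h
end

section
/- For every positive integer n, lcm(1,2,...,n) ≥ 2^{n-1}. -/
/-!
For `0 < k ≤ n`, the `p`-adic valuation of `k * n.choose k` is at most `log p n`: by Kummer, the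
valuation of `n.choose k` counts the positions `i ≤ log p n` at which adding `k` and `n - k` in
base `p` carries, and no carry occurs at the `k.factorization p` positions where `p ^ i ∣ k`.
Since `log p n` is exactly the valuation of `lcm(1, …, n)`, every `(n + 1) * n.choose k`,
being `(k + 1) * (n + 1).choose (k + 1)`, divides `lcm(1, …, n + 1)`; summing over `k` gives
`(n + 1) * 2 ^ n ≤ (n + 1) * lcm(1, …, n + 1)`.
-/

open Finset

namespace Nat

theorem factorization_choose_add_factorization_le_log {p n k : ℕ} (hkn : k ≤ n) :
    (n.choose k).factorization p + k.factorization p ≤ log p n := by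
  rcases eq_or_ne k 0 with rfl | hk
  · simp
  by_cases hp : p.Prime
  swap
  · simp [factorization_eq_zero_of_not_prime _ hp]
  have hb : log p n < log p n + 1 := lt_add_one _
  have hkb : k < p ^ (log p n + 1) := hkn.trans_lt (lt_pow_succ_log_self hp.one_lt n)
  rw [factorization_choose hp hkn hb,
    factorization_eq_card_pow_dvd_of_lt hp (pos_of_ne_zero hk) hkb, ← card_union_of_disjoint]
  · exact (card_le_card (union_subset (filter_subset _ _) (filter_subset _ _))).trans_eq
      (card_Ico _ _)
  · refine disjoint_filter.2 fun i _ hcarry hdvd => ?_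
    rw [mod_eq_zero_of_dvd hdvd, zero_add] at hcarry
    exact hcarry.not_gt (mod_lt _ (pow_pos hp.pos i))

theorem mul_choose_dvd_lcmUpto {n k : ℕ} (hk : k ≠ 0) (hkn : k ≤ n) :
    k * n.choose k ∣ lcmUpto n := by
  have hchoose : n.choose k ≠ 0 := choose_ne_zero hkn
  rw [← factorization_prime_le_iff_dvd (mul_ne_zero hk hchoose) (lcmUpto_ne_zero n)]
  intro p hp
  rw [factorization_mul hk hchoose, factorization_lcmUpto n hp, Finsupp.add_apply, add_comm]
  exact factorization_choose_add_factorization_le_log hkn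

theorem succ_mul_choose_dvd_lcmUpto_succ {n k : ℕ} (hkn : k ≤ n) :
    (n + 1) * n.choose k ∣ lcmUpto (n + 1) := by
  rw [add_one_mul_choose_eq, mul_comm]
  exact mul_choose_dvd_lcmUpto (succ_ne_zero k) (succ_le_succ hkn)

theorem two_pow_le_lcmUpto_succ (n : ℕ) : 2 ^ n ≤ lcmUpto (n + 1) := by
  refine le_of_mul_le_mul_left ?_ (succ_pos n)
  calc (n + 1) * 2 ^ n = ∑ k ∈ range (n + 1), (n + 1) * n.choose k := by
        rw [← mul_sum, sum_range_choose]
    _ ≤ ∑ _k ∈ range (n + 1), lcmUpto (n + 1) := by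
        gcongr with k hk
        exact le_of_dvd (lcmUpto_pos _)
          (succ_mul_choose_dvd_lcmUpto_succ (Nat.lt_add_one_iff.1 (mem_range.1 hk)))
    _ = (n + 1) * lcmUpto (n + 1) := by simp

end Nat

theorem lcm_ge_two_pow (n : ℕ) (hn : 0 < n) :
    2 ^ (n - 1) ≤ ((Finset.Icc 1 n).lcm id : ℕ) := by
  obtain ⟨m, rfl⟩ := Nat.exists_eq_add_one_of_ne_zero hn.ne'
  exact Nat.two_pow_le_lcmUpto_succ m
end

section
/- For every positive integer k and every prime p, the p-adic valuation of the rational number F_{kp,k} := ∑ 1/(i_1 i_2 ⋯ i_k), summed over all k-tuples of positive integers (i_1,...,i_k) with i_1 + ⋯ + i_k = kp, equals -k. -/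
/-!
Since `p * v_p(n) ≤ p ^ v_p(n) ≤ n`, a tuple of positive integers summing to `k p` has total
`p`-adic valuation at most `k`, with equality only for the constant tuple `(p, …, p)`. So the
term `1 / p ^ k` of that tuple has valuation `-k` and every other term has valuation `> -k`;
all terms being positive, the strict ultrametric inequality gives `v_p(F_{kp,k}) = -k`.
-/

/-- `F n k = ∑ 1/(i₁⋯i_k)` over ordered `k`-tuples of positive integers with sum `n`. -/
def F (n k : ℕ) : ℚ :=
  ∑ f ∈ (Finset.Nat.antidiagonalTuple k n).filter (fun f => ∀ j, f j ≠ 0),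
    ∏ j, (1 : ℚ) / (f j : ℚ)

open Finset

variable {ι : Type*} {p : ℕ} [hp : Fact p.Prime]

namespace padicValRat

theorem lt_sum_of_forall_lt {q : ℚ} {s : Finset ι} {f : ι → ℚ} (hs : s.Nonempty)
    (hf : ∀ i ∈ s, 0 < f i) (hlt : ∀ i ∈ s, padicValRat p q < padicValRat p (f i)) :
    padicValRat p q < padicValRat p (∑ i ∈ s, f i) := by
  induction hs using Finset.Nonempty.cons_induction with
  | singleton i => simpa using hlt i (mem_singleton_self i)
  | cons i s hi hs ih =>
    simp only [mem_cons, forall_eq_or_imp] at hf hlt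
    rw [sum_cons]
    exact lt_add_of_lt (add_pos hf.1 (sum_pos hf.2 hs)).ne' hlt.1 (ih hf.2 hlt.2)

theorem add_sum_eq_of_forall_lt {q : ℚ} {s : Finset ι} {f : ι → ℚ} (hq : 0 < q)
    (hf : ∀ i ∈ s, 0 < f i) (hlt : ∀ i ∈ s, padicValRat p q < padicValRat p (f i)) :
    padicValRat p (q + ∑ i ∈ s, f i) = padicValRat p q := by
  obtain rfl | hs := s.eq_empty_or_nonempty
  · rw [sum_empty, add_zero]
  · have hsum := sum_pos hf hs
    exact add_eq_of_lt (add_pos hq hsum).ne' hq.ne' hsum.ne' (lt_sum_of_forall_lt hs hf hlt)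

end padicValRat

theorem padicValNat_prod {s : Finset ι} {g : ι → ℕ} (hg : ∀ i ∈ s, g i ≠ 0) :
    padicValNat p (∏ i ∈ s, g i) = ∑ i ∈ s, padicValNat p (g i) := by
  simp only [← Nat.factorization_def _ hp.out, Nat.factorization_prod_apply hg]

theorem padicValRat_prod_one_div {s : Finset ι} {g : ι → ℕ} (hg : ∀ i ∈ s, g i ≠ 0) :
    padicValRat p (∏ i ∈ s, (1 : ℚ) / g i) = -∑ i ∈ s, padicValNat p (g i) := by
  have hprod : ∏ i ∈ s, (1 : ℚ) / g i = ((∏ i ∈ s, g i : ℕ) : ℚ)⁻¹ := by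
    push_cast
    simp only [one_div, prod_inv_distrib]
  rw [hprod, padicValRat.inv, padicValRat.of_nat, padicValNat_prod hg]

theorem mul_padicValNat_le {n : ℕ} (hn : n ≠ 0) : p * padicValNat p n ≤ n :=
  (Nat.mul_le_pow hp.out.ne_one _).trans <|
    Nat.le_of_dvd (Nat.pos_of_ne_zero hn) pow_padicValNat_dvd

theorem eq_const_of_card_le_sum_padicValNat [Fintype ι] {f : ι → ℕ} (hf : ∀ i, f i ≠ 0)
    (hsum : ∑ i, f i ≤ Fintype.card ι * p)
    (hval : Fintype.card ι ≤ ∑ i, padicValNat p (f i)) : f = fun _ => p := by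
  have hle : ∀ i ∈ univ, p * padicValNat p (f i) ≤ f i := fun i _ => mul_padicValNat_le (hf i)
  have heq : ∀ i ∈ univ, p * padicValNat p (f i) = f i := by
    refine (sum_eq_sum_iff_of_le hle).mp (le_antisymm (sum_le_sum hle) ?_)
    calc ∑ i, f i ≤ Fintype.card ι * p := hsum
      _ ≤ (∑ i, padicValNat p (f i)) * p := Nat.mul_le_mul_right p hval
      _ = ∑ i, p * padicValNat p (f i) := by rw [sum_mul]; simp only [mul_comm]
  have hge : ∀ i ∈ univ, p ≤ f i := fun i hi => by
    have hv : padicValNat p (f i) ≠ 0 := fun h0 => hf i (by simpa [h0] using (heq i hi).symm)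
    calc p = p * 1 := (mul_one p).symm
      _ ≤ p * padicValNat p (f i) := Nat.mul_le_mul_left p (Nat.one_le_iff_ne_zero.mpr hv)
      _ = f i := heq i hi
  have hall := (sum_eq_sum_iff_of_le hge).mp <|
    le_antisymm (sum_le_sum hge) (by simpa [mul_comm] using hsum)
  funext i
  exact (hall i (mem_univ i)).symm

theorem padicValRat_F_kp_general (k : ℕ) (p : ℕ) (hp : p.Prime) :
    padicValRat p (F (k * p) k) = -(k : ℤ) := by
  have := Fact.mk hp
  set s := (Nat.antidiagonalTuple k (k * p)).filter (fun f => ∀ j, f j ≠ 0)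
  have hmem : ∀ f ∈ s, (∀ j, f j ≠ 0) ∧ ∑ j, f j = k * p := by
    simp [s, Nat.mem_antidiagonalTuple, and_comm]
  have hconst : (fun _ => p) ∈ s := by
    simp [s, Nat.mem_antidiagonalTuple, hp.ne_zero]
  have hterm_pos : ∀ f ∈ s, 0 < ∏ j, (1 : ℚ) / f j := fun f hf =>
    prod_pos fun j _ => one_div_pos.mpr <| Nat.cast_pos.mpr <| Nat.pos_of_ne_zero ((hmem f hf).1 j)
  have hval : ∀ f ∈ s, padicValRat p (∏ j, (1 : ℚ) / f j) = -∑ j, padicValNat p (f j) :=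
    fun f hf => padicValRat_prod_one_div fun j _ => (hmem f hf).1 j
  have hmain : padicValRat p (∏ j : Fin k, (1 : ℚ) / p) = -k := by
    rw [hval _ hconst]
    simp [padicValNat_self]
  rw [F, ← add_sum_erase s _ hconst, padicValRat.add_sum_eq_of_forall_lt
    (hterm_pos _ hconst) (fun f hf => hterm_pos f (mem_of_mem_erase hf)), hmain]
  intro f hf
  obtain ⟨hne, hfs⟩ := mem_erase.mp hf
  rw [hmain, hval f hfs, neg_lt_neg_iff, Nat.cast_lt]
  by_contra! hle
  exact hne (eq_const_of_card_le_sum_padicValNat (hmem f hfs).1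
    (by simp [(hmem f hfs).2]) (by simpa using hle))

theorem padicValRat_F_kp (k : ℕ) (hk : 0 < k) (p : ℕ) (hp : p.Prime) :
    padicValRat p (F (k * p) k) = -(k : ℤ) :=
  padicValRat_F_kp_general k p hp
end

section
/- For all natural numbers n ≥ k, F_{n,k} = (-1)^{n+k} · (k!/n!) · s(n,k), where s(n,k) are the Stirling numbers of the first kind. -/
open Polynomial

/-- The signed Stirling numbers of the first kind, defined by
`X(X-1)⋯(X-n+1) = ∑_{k=0}^n s(n,k) Xᵏ`. -/
noncomputable def stirlingFirst (n k : ℕ) : ℚ :=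
  (∏ i ∈ Finset.range n, (X - C (i : ℚ))).coeff k

/-!
Both `F n k` and `k!/n! · |s(n,k)|` satisfy `(n+1) a(n+1,k+1) = n a(n,k+1) + (k+1) a(n,k)` with
the same boundary values. For `F`, write `n = i₁ + ⋯ + i_{k+1}` inside `n F_{n,k+1}`; by symmetry
of the tuple each `iⱼ` contributes as much as `i₁`, and `i₁ / (i₁⋯i_{k+1}) = 1 / (i₂⋯i_{k+1})`,
so `n F_{n,k+1} = (k+1) ∑_{m<n} F_{m,k}`; differencing in `n` gives the recurrence. For the right
side, `s(n,k) = (-1)^(n+k) c(n,k)` with `c = Nat.stirlingFirst`, whose recurrence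
`c(n+1,k+1) = n c(n,k+1) + c(n,k)` is the same one after scaling by `k!/n!`.
-/

namespace Finset.Nat

variable {M : Type*} [AddCommMonoid M]

theorem sum_antidiagonalTuple_succ (k n : ℕ) (g : (Fin (k + 1) → ℕ) → M) :
    ∑ f ∈ antidiagonalTuple (k + 1) n, g f
      = ∑ p ∈ antidiagonal n, ∑ f ∈ antidiagonalTuple k p.2, g (Fin.cons p.1 f) := by
  rw [sum_sigma']
  refine sum_nbij' (fun f => ⟨(f 0, ∑ i, Fin.tail f i), Fin.tail f⟩)
    (fun p => Fin.cons p.1.1 p.2) ?_ ?_ (fun f _ => Fin.cons_self_tail f) ?_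
    (fun f _ => by rw [Fin.cons_self_tail])
  · intro f hf
    rw [mem_antidiagonalTuple, Fin.sum_univ_succ] at hf
    simpa [mem_antidiagonalTuple, Fin.tail] using hf
  · rintro ⟨⟨a, b⟩, f⟩ hp
    simp only [mem_sigma, HasAntidiagonal.mem_antidiagonal, mem_antidiagonalTuple] at hp ⊢
    rw [Fin.sum_cons, hp.2, hp.1]
  · rintro ⟨⟨a, b⟩, f⟩ hp
    simp only [mem_sigma, mem_antidiagonalTuple] at hp
    simp [hp.2]

theorem sum_antidiagonalTuple_comp_perm (k n : ℕ) (σ : Equiv.Perm (Fin k))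
    (g : (Fin k → ℕ) → M) :
    ∑ f ∈ antidiagonalTuple k n, g (f ∘ σ) = ∑ f ∈ antidiagonalTuple k n, g f := by
  refine sum_nbij' (· ∘ σ) (· ∘ σ.symm) ?_ ?_ (fun f _ => by ext; simp)
    (fun f _ => by ext; simp) (fun _ _ => rfl)
  · intro f hf
    simpa [mem_antidiagonalTuple, Equiv.sum_comp σ f] using hf
  · intro f hf
    simpa [mem_antidiagonalTuple, Equiv.sum_comp σ.symm f] using hf

end Finset.Nat

open Finset Finset.Nat

lemma stirlingFirst_eq_neg_one_pow_mul (n k : ℕ) :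
    stirlingFirst n k = (-1) ^ (n + k) * Nat.stirlingFirst n k := by
  induction n generalizing k with
  | zero => cases k <;> simp [stirlingFirst, coeff_one]
  | succ n ih =>
    cases k with
    | zero =>
      simp [stirlingFirst, coeff_zero_eq_eval_zero, eval_prod, prod_range_succ']
    | succ k =>
      rw [stirlingFirst, prod_range_succ, coeff_mul_X_sub_C, ← stirlingFirst, ← stirlingFirst,
        ih, ih, Nat.stirlingFirst_succ_succ]
      push_cast
      ring

-- Tuples with a zero entry contribute nothing because `(0 : ℚ)⁻¹ = 0`.
lemma F_eq_sum_prod_inv (n k : ℕ) :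
    F n k = ∑ f ∈ antidiagonalTuple k n, ∏ j, (f j : ℚ)⁻¹ := by
  rw [F, sum_filter_of_ne]
  · simp only [one_div]
  · intro f _ hf j hj
    exact hf (prod_eq_zero (mem_univ j) (by simp [hj]))

lemma sum_antidiagonalTuple_fst_mul_prod_inv (k n : ℕ) :
    ∑ f ∈ antidiagonalTuple (k + 1) (n + 1), (f 0 : ℚ) * ∏ j, (f j : ℚ)⁻¹
      = ∑ m ∈ range (n + 1), F m k := by
  rw [sum_antidiagonalTuple_succ, sum_antidiagonal_succ]
  simp only [Fin.cons_zero, Fin.prod_univ_succ, Fin.cons_succ, Nat.cast_zero, zero_mul,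
    sum_const_zero, zero_add, Nat.cast_add_one]
  have inner_sum : ∀ p : ℕ × ℕ, ∑ f ∈ antidiagonalTuple k p.2,
      ((p.1 : ℚ) + 1) * (((p.1 : ℚ) + 1)⁻¹ * ∏ j, (f j : ℚ)⁻¹) = F p.2 k := fun p => by
    rw [F_eq_sum_prod_inv]
    exact sum_congr rfl fun f _ => mul_inv_cancel_left₀ (Nat.cast_add_one_ne_zero p.1) _
  simp only [inner_sum]
  exact sum_antidiagonal_swap.symm.trans (sum_antidiagonal_eq_sum_range_succ (fun m _ => F m k) n)

lemma succ_mul_F_succ (n k : ℕ) :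
    ((n : ℚ) + 1) * F (n + 1) (k + 1) = (k + 1) * ∑ m ∈ range (n + 1), F m k := by
  have entry_symm (i : Fin (k + 1)) :
      ∑ f ∈ antidiagonalTuple (k + 1) (n + 1), (f i : ℚ) * ∏ j, (f j : ℚ)⁻¹
        = ∑ f ∈ antidiagonalTuple (k + 1) (n + 1), (f 0 : ℚ) * ∏ j, (f j : ℚ)⁻¹ := by
    rw [← sum_antidiagonalTuple_comp_perm _ _ (Equiv.swap 0 i)
      (fun f => (f 0 : ℚ) * ∏ j, (f j : ℚ)⁻¹)]
    refine sum_congr rfl fun f _ => ?_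
    simp only [Function.comp_apply, Equiv.swap_apply_left,
      Equiv.prod_comp (Equiv.swap 0 i) (fun j => (f j : ℚ)⁻¹)]
  calc ((n : ℚ) + 1) * F (n + 1) (k + 1)
      = ∑ f ∈ antidiagonalTuple (k + 1) (n + 1), ∑ i, (f i : ℚ) * ∏ j, (f j : ℚ)⁻¹ := by
        rw [F_eq_sum_prod_inv, mul_sum]
        refine sum_congr rfl fun f hf => ?_
        rw [← sum_mul, ← Nat.cast_sum, mem_antidiagonalTuple.1 hf, Nat.cast_add_one]
    _ = ∑ _i : Fin (k + 1), ∑ m ∈ range (n + 1), F m k := by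
        rw [sum_comm]
        simp only [entry_symm, sum_antidiagonalTuple_fst_mul_prod_inv]
    _ = (k + 1) * ∑ m ∈ range (n + 1), F m k := by simp

lemma succ_mul_F_succ_succ (n k : ℕ) :
    ((n : ℚ) + 1) * F (n + 1) (k + 1) = n * F n (k + 1) + (k + 1) * F n k := by
  rw [succ_mul_F_succ, sum_range_succ, mul_add]
  cases n with
  | zero => simp
  | succ n => rw [← succ_mul_F_succ, Nat.cast_add_one]

lemma F_eq_factorial_div_mul_stirlingFirst (n k : ℕ) :
    F n k = (k.factorial / n.factorial : ℚ) * Nat.stirlingFirst n k := by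
  induction n generalizing k with
  | zero =>
    cases k with
    | zero => simp [F]
    | succ k => simp [F, antidiagonalTuple_zero_right, filter_singleton]
  | succ n ih =>
    cases k with
    | zero => simp [F]
    | succ k =>
      apply mul_left_cancel₀ (Nat.cast_add_one_ne_zero n : (n : ℚ) + 1 ≠ 0)
      rw [succ_mul_F_succ_succ, ih, ih, Nat.stirlingFirst_succ_succ, Nat.factorial_succ,
        Nat.factorial_succ]
      push_cast
      field_simp

theorem F_eq_stirling_general (n k : ℕ) :
    F n k = (-1) ^ (n + k) * ((k.factorial : ℚ) / (n.factorial : ℚ)) * stirlingFirst n k := by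
  have sign_sq : ((-1 : ℚ) ^ (n + k)) ^ 2 = 1 := by rw [← pow_mul, pow_mul', neg_one_sq, one_pow]
  rw [F_eq_factorial_div_mul_stirlingFirst, stirlingFirst_eq_neg_one_pow_mul]
  linear_combination (-(k.factorial / n.factorial : ℚ) * Nat.stirlingFirst n k) * sign_sq

theorem F_eq_stirling (n k : ℕ) (h : k ≤ n) :
    F n k = (-1) ^ (n + k) * ((k.factorial : ℚ) / (n.factorial : ℚ)) * stirlingFirst n k :=
  F_eq_stirling_general n k
end

section
/- For all natural numbers n ≥ k ≥ 2, F_{n,k} = (k!/n) · ∑_{1 ≤ i_1 < i_2 < ⋯ < i_{k-1} ≤ n-1} 1/(i_1 i_2 ⋯ i_{k-1}). -/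
/-!
If `i₁ + ⋯ + i_k = n` with all `iⱼ ≥ 1`, then `n / (i₁⋯i_k) = ∑ⱼ ∏_{l ≠ j} 1 / i_l`; deleting the
`j`-th part maps the compositions of `n` into `k` parts bijectively onto the compositions of all
`s < n` into `k - 1` parts, whence `n F(n, k) = k ∑_{s < n} F(s, k - 1)`. Classifying the
`j`-subsets of `{1, …, n}` by their largest element gives the same recursion for the elementary
symmetric sums `e_j(1, 1/2, …, 1/n)`, and induction on `k` from `F(n, 1) = 1/n` concludes.
-/

open Finset

def compositions (k n : ℕ) : Finset (Fin k → ℕ) :=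
  (Nat.antidiagonalTuple k n).filter fun f => ∀ j, f j ≠ 0

lemma mem_compositions {k n : ℕ} {f : Fin k → ℕ} :
    f ∈ compositions k n ↔ ∑ j, f j = n ∧ ∀ j, f j ≠ 0 := by
  rw [compositions, mem_filter, Nat.mem_antidiagonalTuple]

lemma F_eq_sum_compositions (n k : ℕ) :
    F n k = ∑ f ∈ compositions k n, ∏ j, ((f j : ℚ))⁻¹ := by
  simp only [F, compositions, one_div]

lemma F_one (n : ℕ) : F n 1 = (n : ℚ)⁻¹ := by
  rcases eq_or_ne n 0 with rfl | hn
  · simp [F, Nat.antidiagonalTuple_one, filter_singleton]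
  · simp [F, Nat.antidiagonalTuple_one, filter_singleton, hn]

lemma F_zero_succ (m : ℕ) : F 0 (m + 1) = 0 := by
  simp [F, Nat.antidiagonalTuple_zero_right, filter_singleton]

lemma sum_compositions_removeNth {β : Type*} [AddCommMonoid β] (n m : ℕ) (j : Fin (m + 1))
    (g : (Fin m → ℕ) → β) :
    ∑ f ∈ compositions (m + 1) n, g (j.removeNth f) =
      ∑ s ∈ range n, ∑ h ∈ compositions m s, g h := by
  have split_sum (f : Fin (m + 1) → ℕ) : ∑ l, f l = f j + ∑ l, j.removeNth f l :=
    Fin.sum_univ_succAbove f j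
  rw [sum_sigma']
  refine sum_nbij' (fun f => ⟨n - f j, j.removeNth f⟩) (fun p => j.insertNth (n - p.1) p.2)
    ?_ ?_ ?_ ?_ fun _ _ => rfl
  · intro f hf
    obtain ⟨hsum, hpos⟩ := mem_compositions.1 hf
    rw [split_sum] at hsum
    have hj := hpos j
    simp only [mem_sigma, mem_range, mem_compositions]
    exact ⟨by omega, by omega, fun l => hpos _⟩
  · intro p hp
    simp only [mem_sigma, mem_range, mem_compositions] at hp ⊢
    obtain ⟨hs, hsum, hpos⟩ := hp
    rw [split_sum, Fin.forall_iff_succAbove j]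
    simp only [Fin.insertNth_apply_same, Fin.removeNth_insertNth, hsum,
      Fin.insertNth_apply_succAbove]
    exact ⟨by omega, by omega, hpos⟩
  · intro f hf
    obtain ⟨hsum, -⟩ := mem_compositions.1 hf
    rw [split_sum] at hsum
    simp only [show n - (n - f j) = f j by omega, Fin.insertNth_self_removeNth]
  · intro p hp
    simp only [mem_sigma, mem_range] at hp
    simp [show n - (n - p.1) = p.1 by omega]

lemma sum_mul_prod_inv_eq_sum_prod_inv_succAbove {K : Type*} [Field K] {m : ℕ}
    (f : Fin (m + 1) → K) (hf : ∀ j, f j ≠ 0) :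
    (∑ j, f j) * ∏ j, (f j)⁻¹ = ∑ j : Fin (m + 1), ∏ l, (f (j.succAbove l))⁻¹ := by
  rw [sum_mul]
  refine sum_congr rfl fun j _ => ?_
  rw [Fin.prod_univ_succAbove _ j, mul_inv_cancel_left₀ (hf j)]

lemma natCast_mul_F_succ (n m : ℕ) :
    (n : ℚ) * F n (m + 1) = (m + 1) * ∑ s ∈ range n, F s m := by
  calc (n : ℚ) * F n (m + 1)
      = ∑ f ∈ compositions (m + 1) n, ∑ j : Fin (m + 1), ∏ l, ((j.removeNth f l : ℕ) : ℚ)⁻¹ := by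
        rw [F_eq_sum_compositions, mul_sum]
        refine sum_congr rfl fun f hf => ?_
        obtain ⟨hsum, hpos⟩ := mem_compositions.1 hf
        rw [← hsum, Nat.cast_sum]
        exact sum_mul_prod_inv_eq_sum_prod_inv_succAbove _ fun j => Nat.cast_ne_zero.2 (hpos j)
    _ = ∑ j : Fin (m + 1), ∑ s ∈ range n, F s m := by
        rw [sum_comm]
        simp only [sum_compositions_removeNth n m _ fun h => ∏ l, ((h l : ℕ) : ℚ)⁻¹,
          F_eq_sum_compositions]
    _ = (m + 1) * ∑ s ∈ range n, F s m := by simp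

def esymmRecip (n j : ℕ) : ℚ :=
  ∑ s ∈ powersetCard j (Icc 1 n), (∏ i ∈ s, (i : ℚ))⁻¹

lemma sum_powersetCard_succ_insert {α β : Type*} [DecidableEq α] [AddCommMonoid β] {a : α}
    {s : Finset α} (ha : a ∉ s) (j : ℕ) (g : Finset α → β) :
    ∑ t ∈ powersetCard (j + 1) (insert a s), g t =
      ∑ t ∈ powersetCard (j + 1) s, g t + ∑ t ∈ powersetCard j s, g (insert a t) := by
  rw [powersetCard_succ_insert ha, sum_union, sum_image]
  · exact insert_erase_invOn.2.injOn.mono fun t ht => notMem_mono (mem_powersetCard.1 ht).1 ha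
  · aesop (add simp [disjoint_left, insert_subset_iff])

lemma esymmRecip_succ_succ (n j : ℕ) :
    esymmRecip (n + 1) (j + 1) = esymmRecip n (j + 1) + ((n : ℚ) + 1)⁻¹ * esymmRecip n j := by
  have hn : n + 1 ∉ Icc 1 n := by simp
  rw [esymmRecip, ← insert_Icc_right_eq_Icc_add_one (by omega), sum_powersetCard_succ_insert hn,
    esymmRecip, esymmRecip, mul_sum]
  congr 1
  refine sum_congr rfl fun t ht => ?_
  rw [prod_insert fun h => hn ((mem_powersetCard.1 ht).1 h), mul_inv]
  push_cast
  rfl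

lemma esymmRecip_succ_eq_sum (n j : ℕ) :
    esymmRecip n (j + 1) = ∑ s ∈ range (n + 1), (s : ℚ)⁻¹ * esymmRecip (s - 1) j := by
  induction n with
  | zero => simp [esymmRecip, powersetCard_eq_empty.2 (card_empty.trans_lt j.succ_pos)]
  | succ n ih => rw [sum_range_succ, ← ih, esymmRecip_succ_succ]; simp

-- For `n = 0` both sides vanish, since `(0 : ℚ)⁻¹ = 0`.
lemma F_succ (n m : ℕ) :
    F n (m + 1) = ((m + 1).factorial : ℚ) / n * esymmRecip (n - 1) m := by
  induction m generalizing n with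
  | zero => simp [F_one, esymmRecip]
  | succ m ih =>
    rcases n with _ | n
    · simp [F_zero_succ]
    have hsum : ∑ s ∈ range (n + 1), F s (m + 1) =
        ((m + 1).factorial : ℚ) * esymmRecip n (m + 1) := by
      simp only [ih, esymmRecip_succ_eq_sum, mul_sum, div_eq_mul_inv, mul_assoc]
    have hrec := natCast_mul_F_succ (n + 1) (m + 1)
    rw [hsum] at hrec
    rw [Nat.factorial_succ, Nat.add_sub_cancel]
    field_simp
    push_cast at hrec ⊢
    linear_combination hrec

theorem F_eq_sum_subsets_general (n k : ℕ) (hk : 2 ≤ k) :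
    F n k = ((k.factorial : ℚ) / (n : ℚ)) *
      ∑ s ∈ Finset.powersetCard (k - 1) (Finset.Icc 1 (n - 1)),
        (∏ i ∈ s, (i : ℚ))⁻¹ := by
  obtain ⟨m, rfl⟩ : ∃ m, k = m + 1 := ⟨k - 1, by omega⟩
  exact F_succ n m

theorem F_eq_sum_subsets (n k : ℕ) (hk : 2 ≤ k) (hkn : k ≤ n) :
    F n k = ((k.factorial : ℚ) / (n : ℚ)) *
      ∑ s ∈ Finset.powersetCard (k - 1) (Finset.Icc 1 (n - 1)),
        (∏ i ∈ s, (i : ℚ))⁻¹ :=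
  F_eq_sum_subsets_general n k hk
end

section
/- For all natural numbers n ≥ k and every integer-valued polynomial P of degree ≤ n, the identity P^{(k)} = ∑_{m=k}^{n} (-1)^{m-k} F_{m,k} Δ^m P holds, where Δ is the forward difference operator ΔP(X) = P(X+1) - P(X). -/
open Polynomial

/-- The forward difference operator `ΔP(X) = P(X+1) - P(X)`. -/
noncomputable def deltaOp (P : Polynomial ℚ) : Polynomial ℚ := P.comp (X + 1) - P

/-!
On polynomials of degree `≤ n` the derivation `D` is nilpotent, `D^(n+1) = 0`, so `g(D)` only
depends on `g` modulo `X^(n+1)`. Taylor's formula reads `Δ = E(D)`, where `E = expTrunc n - 1` is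
the exponential series minus `1` truncated at degree `n`. If `L = logTrunc n` truncates
`log(1 + X)`, then `L ∘ E ≡ X` modulo `X^(n+1)`: differentiating,
`(1 + E) (L ∘ E)' = (1 - (-E)^n) E' ≡ 1 + E` modulo `X^n` since `E' ≡ 1 + E`. Hence
`D^k = (L ∘ E)^k (D) = L^k(Δ)`, and for `m ≤ n` the coefficient of `X^m` in `L^k` is
`(-1)^(m-k) F m k`.
-/

open Finset
open scoped Nat

section CommSemiring

variable {R : Type*} [CommSemiring R]

lemma aeval_derivative_X_pow_apply (k : ℕ) (P : R[X]) :
    aeval (derivative : Module.End R R[X]) (X ^ k : R[X]) P = derivative^[k] P := by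
  rw [map_pow, aeval_X, Module.End.pow_apply]

lemma comp_X_add_one_eq_sum_hasseDeriv {P : R[X]} {N : ℕ} (hP : P.natDegree < N) :
    P.comp (X + 1) = ∑ i ∈ range N, hasseDeriv i P := by
  ext j
  rw [← C_1, ← taylor_apply, taylor_coeff, finsetSum_coeff,
    eval_eq_sum_range' ((natDegree_hasseDeriv_le P j).trans_lt (Nat.sub_lt_of_lt hP)) 1]
  refine sum_congr rfl fun m _ => ?_
  rw [one_pow, mul_one, hasseDeriv_coeff, hasseDeriv_coeff, add_comm j m,
    Nat.choose_symm_add]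

lemma coeff_sum_C_mul_X_pow_pow (s : Finset ℕ) (a : ℕ → R) (k m : ℕ) :
    ((∑ i ∈ s, C (a i) * X ^ i) ^ k).coeff m =
      ∑ f ∈ (Fintype.piFinset fun _ : Fin k => s).filter (fun f => ∑ j, f j = m),
        ∏ j, a (f j) := by
  rw [← Fin.prod_const, prod_univ_sum, finsetSum_coeff, sum_filter]
  refine sum_congr rfl fun f _ => ?_
  rw [prod_mul_distrib, ← map_prod, prod_pow_eq_pow_sum, coeff_C_mul_X_pow]
  exact if_congr eq_comm rfl rfl

end CommSemiring

section CommRing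

variable {R : Type*} [CommRing R]

lemma aeval_derivative_apply_eq_of_X_pow_dvd {n : ℕ} {g h P : R[X]} (hgh : X ^ (n + 1) ∣ g - h)
    (hP : P.natDegree ≤ n) :
    aeval (derivative : Module.End R R[X]) g P = aeval (derivative : Module.End R R[X]) h P := by
  obtain ⟨q, hq⟩ := hgh
  rw [← sub_eq_zero, ← LinearMap.sub_apply, ← map_sub, hq, mul_comm, map_mul,
    Module.End.mul_apply, aeval_derivative_X_pow_apply,
    iterate_derivative_eq_zero (Nat.lt_succ_of_le hP), map_zero]

lemma X_pow_dvd_sub_comp_of_X_dvd {j : ℕ} {p q r : R[X]} (hr : X ∣ r) (h : X ^ j ∣ p - q) :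
    X ^ j ∣ p.comp r - q.comp r := by
  obtain ⟨s, hs⟩ := h
  rw [← sub_comp, hs, mul_comp, X_pow_comp]
  exact (pow_dvd_pow_of_dvd hr j).mul_right _

lemma X_pow_dvd_sub_sum_range_coeff (p : R[X]) (N : ℕ) :
    X ^ N ∣ p - ∑ m ∈ range N, C (p.coeff m) * X ^ m := by
  rw [X_pow_dvd_iff]
  intro d hd
  simp [hd]

end CommRing

lemma X_pow_succ_dvd_of_X_pow_dvd_derivative {R : Type*} [Semiring R] [NoZeroDivisors R]
    [CharZero R] {n : ℕ} {p : R[X]} (h0 : p.coeff 0 = 0) (h : X ^ n ∣ derivative p) :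
    X ^ (n + 1) ∣ p := by
  rw [X_pow_dvd_iff] at h ⊢
  rintro (_ | d) hd
  · exact h0
  · have := h d (by omega)
    rw [coeff_derivative, mul_eq_zero] at this
    exact this.resolve_right (by exact_mod_cast Nat.succ_ne_zero d)

noncomputable def expTrunc (n : ℕ) : ℚ[X] := ∑ i ∈ range (n + 1), C (i ! : ℚ)⁻¹ * X ^ i

noncomputable def logTrunc (n : ℕ) : ℚ[X] :=
  ∑ i ∈ Icc 1 n, C ((-1) ^ (i - 1) * (i : ℚ)⁻¹) * X ^ i

lemma X_dvd_expTrunc_sub_one (n : ℕ) : X ∣ expTrunc n - 1 := by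
  rw [expTrunc, sum_range_succ']
  simp only [Nat.factorial_zero, Nat.cast_one, inv_one, map_one, pow_zero, mul_one,
    add_sub_cancel_right]
  exact dvd_sum fun i _ => (dvd_pow_self X i.succ_ne_zero).mul_left _

lemma X_dvd_logTrunc (n : ℕ) : X ∣ logTrunc n :=
  dvd_sum fun i hi => (dvd_pow_self X (by simp at hi; omega)).mul_left _

lemma derivative_expTrunc (n : ℕ) :
    derivative (expTrunc n) = expTrunc n - C (n ! : ℚ)⁻¹ * X ^ n := by
  rw [expTrunc, derivative_sum, sum_range_succ', sum_range_succ, add_sub_cancel_right]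
  simp only [derivative_C_mul_X_pow, Nat.cast_zero, mul_zero, map_zero, zero_mul, add_zero,
    Nat.add_sub_cancel]
  refine sum_congr rfl fun i _ => ?_
  rw [Nat.factorial_succ]
  push_cast
  field_simp

lemma derivative_logTrunc_mul_X_add_one (n : ℕ) :
    derivative (logTrunc n) * (X + 1) = 1 - (-X) ^ n := by
  have hderiv : derivative (logTrunc n) = ∑ i ∈ range n, (-X) ^ i := by
    rw [logTrunc, derivative_sum, ← Ico_add_one_right_eq_Icc, sum_Ico_eq_sum_range,
      Nat.add_sub_cancel]
    refine sum_congr rfl fun i _ => ?_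
    rw [derivative_C_mul_X_pow, add_comm 1 i, Nat.add_sub_cancel,
      inv_mul_cancel_right₀ (by positivity), neg_pow (X : ℚ[X]), map_pow, map_neg, map_one]
  rw [hderiv]
  linear_combination -geom_sum_mul (-X : ℚ[X]) n

lemma natDegree_deltaOp_le (P : ℚ[X]) : (deltaOp P).natDegree ≤ P.natDegree :=
  (natDegree_sub_le _ _).trans
    (max_le (by rw [natDegree_comp, ← C_1, natDegree_X_add_C, mul_one]) le_rfl)

lemma deltaOp_eq_aeval_expTrunc_sub_one {n : ℕ} {P : ℚ[X]} (hP : P.natDegree ≤ n) :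
    deltaOp P = aeval (derivative : Module.End ℚ ℚ[X]) (expTrunc n - 1) P := by
  rw [deltaOp, comp_X_add_one_eq_sum_hasseDeriv (Nat.lt_succ_of_le hP), map_sub, map_one,
    LinearMap.sub_apply, Module.End.one_apply, expTrunc, map_sum, LinearMap.sum_apply]
  congr 1
  refine sum_congr rfl fun i _ => ?_
  rw [map_mul, aeval_C, Module.End.mul_apply, aeval_derivative_X_pow_apply,
    Module.algebraMap_end_apply, ← factorial_smul_hasseDeriv, LinearMap.smul_apply,
    ← Nat.cast_smul_eq_nsmul ℚ, smul_smul, inv_mul_cancel₀ (by positivity), one_smul]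

lemma iterate_deltaOp_eq_aeval {n : ℕ} (m : ℕ) {P : ℚ[X]} (hP : P.natDegree ≤ n) :
    deltaOp^[m] P = aeval (derivative : Module.End ℚ ℚ[X]) ((expTrunc n - 1) ^ m) P := by
  induction m generalizing P with
  | zero => simp
  | succ m ih =>
    rw [Function.iterate_succ_apply, ih ((natDegree_deltaOp_le P).trans hP),
      deltaOp_eq_aeval_expTrunc_sub_one hP, pow_succ, map_mul, Module.End.mul_apply]

lemma X_pow_dvd_logTrunc_comp_sub_X (n : ℕ) :
    X ^ (n + 1) ∣ (logTrunc n).comp (expTrunc n - 1) - X := by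
  obtain ⟨Q, hQ⟩ := X_dvd_expTrunc_sub_one n
  apply X_pow_succ_dvd_of_X_pow_dvd_derivative
  · rw [coeff_sub, coeff_X_zero, sub_zero, coeff_zero_eq_eval_zero, eval_comp,
      ← coeff_zero_eq_eval_zero, X_dvd_iff.mp (X_dvd_expTrunc_sub_one n),
      ← coeff_zero_eq_eval_zero, X_dvd_iff.mp (X_dvd_logTrunc n)]
  · have hcop : IsCoprime (X ^ n) (expTrunc n) :=
      IsCoprime.pow_left ⟨-Q, 1, by linear_combination hQ⟩
    refine hcop.dvd_of_dvd_mul_left ?_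
    have hgeom := congrArg (·.comp (expTrunc n - 1)) (derivative_logTrunc_mul_X_add_one n)
    simp only [mul_comp, add_comp, X_comp, one_comp, sub_comp, pow_comp, neg_comp] at hgeom
    have hprod : expTrunc n * derivative ((logTrunc n).comp (expTrunc n - 1) - X) =
        -(C (n ! : ℚ)⁻¹ * X ^ n) - (-(expTrunc n - 1)) ^ n * derivative (expTrunc n) := by
      rw [derivative_sub, derivative_comp, derivative_X, derivative_sub, derivative_one,
        sub_zero]
      linear_combination derivative (expTrunc n) * hgeom + derivative_expTrunc n
    rw [hprod]
    exact dvd_sub (dvd_neg.mpr (dvd_mul_left _ _))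
      ((pow_dvd_pow_of_dvd (dvd_neg.mpr ⟨Q, hQ⟩) n).mul_right _)

lemma coeff_logTrunc_pow {n m : ℕ} (k : ℕ) (hm : m ≤ n) :
    (logTrunc n ^ k).coeff m = (-1) ^ (m - k) * F m k := by
  have hsupp : (Fintype.piFinset fun _ : Fin k => Icc 1 n).filter (fun f => ∑ j, f j = m) =
      (Finset.Nat.antidiagonalTuple k m).filter (fun f => ∀ j, f j ≠ 0) := by
    ext f
    simp only [mem_filter, Fintype.mem_piFinset, mem_Icc, Finset.Nat.mem_antidiagonalTuple]
    constructor
    · rintro ⟨hf, hsum⟩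
      exact ⟨hsum, fun j => Nat.one_le_iff_ne_zero.mp (hf j).1⟩
    · rintro ⟨hsum, hf⟩
      refine ⟨fun j => ⟨Nat.one_le_iff_ne_zero.mpr (hf j), ?_⟩, hsum⟩
      exact (single_le_sum (fun _ _ => Nat.zero_le _) (mem_univ j)).trans (hsum.trans_le hm)
  rw [logTrunc, coeff_sum_C_mul_X_pow_pow, hsupp, F, mul_sum]
  refine sum_congr rfl fun f hf => ?_
  rw [mem_filter, Finset.Nat.mem_antidiagonalTuple] at hf
  obtain ⟨hsum, hpos⟩ := hf
  have hexp : ∑ j, (f j - 1) = m - k := by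
    rw [sum_tsub_distrib _ fun j _ => Nat.one_le_iff_ne_zero.mpr (hpos j), hsum]
    simp
  rw [prod_mul_distrib, prod_pow_eq_pow_sum, hexp]
  simp only [one_div]

theorem iterated_derivative_eq_sum_deltaOp_general (n k : ℕ)
    (P : Polynomial ℚ) (hdeg : P.natDegree ≤ n) :
    derivative^[k] P =
      ∑ m ∈ Finset.Icc k n, C ((-1 : ℚ) ^ (m - k) * F m k) * deltaOp^[m] P := by
  set T := ∑ m ∈ range (n + 1), C ((logTrunc n ^ k).coeff m) * X ^ m
  have hT : X ^ (n + 1) ∣ T.comp (expTrunc n - 1) - X ^ k := by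
    have hcomp := X_pow_dvd_sub_comp_of_X_dvd (X_dvd_expTrunc_sub_one n)
      (X_pow_dvd_sub_sum_range_coeff (logTrunc n ^ k) (n + 1))
    have hpow := sub_dvd_pow_sub_pow ((logTrunc n).comp (expTrunc n - 1)) X k
    rw [← pow_comp] at hpow
    convert dvd_sub ((X_pow_dvd_logTrunc_comp_sub_X n).trans hpow) hcomp using 1
    ring
  calc derivative^[k] P = aeval (derivative : Module.End ℚ ℚ[X]) (X ^ k : ℚ[X]) P :=
        (aeval_derivative_X_pow_apply k P).symm
    _ = aeval (derivative : Module.End ℚ ℚ[X]) (T.comp (expTrunc n - 1)) P :=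
        (aeval_derivative_apply_eq_of_X_pow_dvd hT hdeg).symm
    _ = ∑ m ∈ range (n + 1), C ((logTrunc n ^ k).coeff m) * deltaOp^[m] P := by
      rw [Polynomial.sum_comp, map_sum, LinearMap.sum_apply]
      refine sum_congr rfl fun m _ => ?_
      rw [mul_comp, C_comp, X_pow_comp, map_mul, aeval_C, Module.End.mul_apply,
        Module.algebraMap_end_apply, iterate_deltaOp_eq_aeval m hdeg, smul_eq_C_mul]
    _ = _ := by
      rw [← sum_subset (fun m hm => mem_range.mpr (Nat.lt_succ_of_le (mem_Icc.mp hm).2))]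
      · exact sum_congr rfl fun m hm => by rw [coeff_logTrunc_pow k (mem_Icc.mp hm).2]
      · intro m hm hmk
        have hlt : m < k := by simp only [mem_range, mem_Icc] at hm hmk; omega
        rw [X_pow_dvd_iff.mp (pow_dvd_pow_of_dvd (X_dvd_logTrunc n) k) m hlt, map_zero, zero_mul]

theorem iterated_derivative_eq_sum_deltaOp (n k : ℕ) (hkn : k ≤ n)
    (P : Polynomial ℚ) (hP : IntValued P) (hdeg : P.natDegree ≤ n) :
    derivative^[k] P =
      ∑ m ∈ Finset.Icc k n, C ((-1 : ℚ) ^ (m - k) * F m k) * deltaOp^[m] P :=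
  iterated_derivative_eq_sum_deltaOp_general n k P hdeg
end

section
/- For all natural numbers n ≥ k, if c is a positive integer such that c·P^{(k)} is integer-valued for every integer-valued polynomial P of degree ≤ n, then k!·c is a multiple of q_{n,k} := lcm{ i_1 i_2 ⋯ i_k : i_1,...,i_k positive integers with i_1 + ⋯ + i_k ≤ n }. -/
/-!
For positive `i₁, …, i_k` with `∑ iⱼ ≤ n`, the product `P = ∏ⱼ (X choose iⱼ)` is integer-valued of
degree `≤ n`. Each factor is `X · rⱼ` with `rⱼ(0) = (-1)^(iⱼ-1) / iⱼ`, so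
`P^{(k)}(0) = k! · [X^k] P = ±k! / ∏ⱼ iⱼ`. Integrality of `c · P^{(k)}(0)` thus says
`∏ⱼ iⱼ ∣ k! · c`, and `q n k` is the lcm of these products.
-/

open Polynomial

/-- `q n k` is the lcm of all products `i₁⋯i_k` over `k`-tuples of positive integers
with `i₁ + ⋯ + i_k ≤ n` (with `q n 0 = 1`). -/
def q (n k : ℕ) : ℕ :=
  ((Finset.range (n + 1)).biUnion
      (fun m => (Finset.Nat.antidiagonalTuple k m).filter (fun f => ∀ j, f j ≠ 0))).lcm
    (fun f => ∏ j, f j)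

open Finset

theorem q_dvd_of_forall_prod_dvd {n k a : ℕ}
    (h : ∀ f : Fin k → ℕ, (∀ j, f j ≠ 0) → ∑ j, f j ≤ n → ∏ j, f j ∣ a) : q n k ∣ a := by
  refine Finset.lcm_dvd fun f hf => ?_
  simp only [mem_biUnion, mem_filter, mem_range, Nat.mem_antidiagonalTuple] at hf
  obtain ⟨m, hm, hsum, hpos⟩ := hf
  exact h f hpos (by omega)

theorem IntValued.prod {ι : Type*} {s : Finset ι} {P : ι → ℚ[X]}
    (hP : ∀ i ∈ s, IntValued (P i)) : IntValued (∏ i ∈ s, P i) := by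
  intro m
  choose z hz using fun i hi => hP i hi m
  refine ⟨∏ i ∈ s.attach, z i i.2, ?_⟩
  rw [eval_prod, ← prod_attach s, Int.cast_prod]
  exact prod_congr rfl fun i _ => hz i i.2

noncomputable def binomPoly (i : ℕ) : ℚ[X] := C (i.factorial : ℚ)⁻¹ * descPochhammer ℚ i

theorem binomPoly_eval_intCast (i : ℕ) (m : ℤ) :
    (binomPoly i).eval (m : ℚ) = Ring.choose m i := by
  rw [binomPoly, eval_mul, eval_C, ← descPochhammer_eval_cast, eval_eq_smeval,
    Ring.descPochhammer_eq_factorial_smul_choose, nsmul_eq_mul, Int.cast_mul, Int.cast_natCast,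
    inv_mul_cancel_left₀ (by exact_mod_cast i.factorial_ne_zero)]

theorem intValued_binomPoly (i : ℕ) : IntValued (binomPoly i) :=
  fun m => ⟨_, binomPoly_eval_intCast i m⟩

theorem binomPoly_ne_zero (i : ℕ) : binomPoly i ≠ 0 :=
  mul_ne_zero (by simp [Nat.factorial_ne_zero]) (monic_descPochhammer ℚ i).ne_zero

theorem natDegree_binomPoly (i : ℕ) : (binomPoly i).natDegree = i := by
  rw [binomPoly, natDegree_C_mul (by simp [Nat.factorial_ne_zero]), descPochhammer_natDegree]

theorem natDegree_prod_binomPoly {ι : Type*} (s : Finset ι) (f : ι → ℕ) :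
    (∏ j ∈ s, binomPoly (f j)).natDegree = ∑ j ∈ s, f j := by
  rw [natDegree_prod _ _ fun j _ => binomPoly_ne_zero (f j)]
  simp only [natDegree_binomPoly]

theorem descPochhammer_eval_neg_one {R : Type*} [CommRing R] (i : ℕ) :
    (descPochhammer R i).eval (-1) = (-1) ^ i * i.factorial := by
  induction i with
  | zero => simp
  | succ i ih =>
    rw [descPochhammer_succ_eval, ih, Nat.factorial_succ]
    push_cast
    ring

theorem binomPoly_eq_X_mul {i : ℕ} (hi : i ≠ 0) :
    ∃ r : ℚ[X], binomPoly i = X * r ∧ r.eval 0 = (-1) ^ (i - 1) / i := by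
  obtain ⟨i, rfl⟩ := Nat.exists_eq_succ_of_ne_zero hi
  refine ⟨C ((i + 1).factorial : ℚ)⁻¹ * (descPochhammer ℚ i).comp (X - 1), ?_, ?_⟩
  · rw [binomPoly, descPochhammer_succ_left]
    ring
  · have : (i.factorial : ℚ) ≠ 0 := by exact_mod_cast i.factorial_ne_zero
    simp only [eval_mul, eval_C, eval_comp, eval_sub, eval_X, eval_one, zero_sub,
      descPochhammer_eval_neg_one, Nat.factorial_succ, Nat.succ_sub_one]
    push_cast
    field_simp

theorem coeff_card_prod_X_mul {R ι : Type*} [CommSemiring R] (s : Finset ι) (r : ι → R[X]) :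
    (∏ j ∈ s, X * r j).coeff #s = ∏ j ∈ s, (r j).eval 0 := by
  rw [prod_mul_distrib, prod_const, coeff_X_pow_mul', if_pos le_rfl, Nat.sub_self,
    coeff_zero_eq_eval_zero, eval_prod]

theorem coeff_card_prod_binomPoly {ι : Type*} (s : Finset ι) {f : ι → ℕ}
    (hf : ∀ j, f j ≠ 0) :
    (∏ j ∈ s, binomPoly (f j)).coeff #s = (-1) ^ (∑ j ∈ s, (f j - 1)) / ∏ j ∈ s, (f j : ℚ) := by
  choose r hr hr0 using fun j => binomPoly_eq_X_mul (hf j)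
  simp only [hr, coeff_card_prod_X_mul, hr0, prod_div_distrib, prod_pow_eq_pow_sum]

theorem eval_zero_iterate_derivative {R : Type*} [Semiring R] (p : R[X]) (k : ℕ) :
    (derivative^[k] p).eval 0 = k.factorial * p.coeff k := by
  rw [← coeff_zero_eq_eval_zero, coeff_iterate_derivative, zero_add, Nat.descFactorial_self,
    nsmul_eq_mul]

theorem dvd_of_mul_div_eq_intCast {a N : ℕ} {e z : ℤ} (hN : N ≠ 0) (he : IsUnit e)
    (h : (a : ℚ) * (e / N) = z) : N ∣ a := by
  have : (a : ℤ) * e = z * N := by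
    rw [mul_div_assoc', div_eq_iff (by exact_mod_cast hN)] at h
    exact_mod_cast h
  exact Int.natCast_dvd_natCast.mp (he.dvd_mul_right.mp (Dvd.intro_left _ this.symm))

theorem q_dvd_factorial_mul_general (n k : ℕ) (c : ℕ)
    (h : ∀ P : Polynomial ℚ, IntValued P → P.natDegree ≤ n →
      IntValued (C (c : ℚ) * derivative^[k] P)) :
    q n k ∣ k.factorial * c := by
  refine q_dvd_of_forall_prod_dvd fun f hf hsum => ?_
  set P := ∏ j, binomPoly (f j)
  have hPint : IntValued P := IntValued.prod fun j _ => intValued_binomPoly (f j)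
  have hPdeg : P.natDegree ≤ n := (natDegree_prod_binomPoly _ f).trans_le hsum
  have hcoeff : P.coeff k = (-1) ^ (∑ j, (f j - 1)) / ∏ j, (f j : ℚ) := by
    simpa using coeff_card_prod_binomPoly univ hf
  obtain ⟨z, hz⟩ := h P hPint hPdeg 0
  rw [Int.cast_zero, eval_mul, eval_C, eval_zero_iterate_derivative, hcoeff] at hz
  refine dvd_of_mul_div_eq_intCast (e := (-1) ^ (∑ j, (f j - 1))) (z := z)
    (prod_ne_zero_iff.mpr fun j _ => hf j) (isUnit_neg_one.pow _) ?_
  push_cast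
  linear_combination hz

theorem q_dvd_factorial_mul (n k : ℕ) (hkn : k ≤ n) (c : ℕ) (hc : 0 < c)
    (h : ∀ P : Polynomial ℚ, IntValued P → P.natDegree ≤ n →
      IntValued (C (c : ℚ) * derivative^[k] P)) :
    q n k ∣ k.factorial * c :=
  q_dvd_factorial_mul_general n k c h
end

section
/- For every natural number n and every prime p, the p-adic valuation of q_n := lcm{ i_1 i_2 ⋯ i_k : k ≥ 1, i_1,...,i_k ≥ 1, i_1 + ⋯ + i_k ≤ n } equals ⌊n/p⌋; consequently q_n = ∏_{p prime} p^{⌊n/p⌋}. -/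
/-- `qTot n` is the lcm of all products `i₁⋯i_k` over all `k` and all `k`-tuples of
positive integers with `i₁ + ⋯ + i_k ≤ n`. -/
def qTot (n : ℕ) : ℕ := (Finset.range (n + 1)).lcm (fun k => q n k)

/-!
Since `p ^ v ≥ p * v`, a positive integer `i` satisfies `p * v_p(i) ≤ i`; summing over the
factors, `p * v_p(i₁⋯i_k) ≤ i₁ + ⋯ + i_k ≤ n`, so every product in the lcm divides
`∏_{p ≤ n} p ^ (n / p)`. Conversely the product of `n / p` copies of `p` is admissible, so
`p ^ (n / p)` divides `qTot n`. Comparing factorizations gives equality.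
-/

namespace Nat

lemma mul_factorization_le_self (n p : ℕ) : p * n.factorization p ≤ n := by
  rcases eq_or_ne n 0 with rfl | hn
  · simp
  by_cases hp : p.Prime
  · exact (mul_le_pow hp.one_lt.ne' _).trans (ordProj_le p hn)
  · simp [factorization_eq_zero_of_not_prime n hp]

lemma mul_factorization_prod_le_sum {ι : Type*} (s : Finset ι) (f : ι → ℕ) (p : ℕ) :
    p * (∏ i ∈ s, f i).factorization p ≤ ∑ i ∈ s, f i := by
  by_cases h0 : ∏ i ∈ s, f i = 0
  · simp [h0]
  rw [factorization_prod fun i hi => Finset.prod_ne_zero_iff.mp h0 i hi,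
    Finsupp.finsetSum_apply, Finset.mul_sum]
  exact Finset.sum_le_sum fun i _ => mul_factorization_le_self (f i) p

lemma factorization_prod_primes_pow {S : Finset ℕ} (hS : ∀ r ∈ S, r.Prime) (e : ℕ → ℕ)
    (p : ℕ) : (∏ r ∈ S, r ^ e r).factorization p = if p ∈ S then e p else 0 := by
  rw [factorization_prod fun r hr => pow_ne_zero _ (hS r hr).ne_zero,
    Finsupp.finsetSum_apply]
  simp_rw [factorization_pow, Finsupp.smul_apply]
  rw [Finset.sum_congr rfl fun r hr => by rw [(hS r hr).factorization, Finsupp.single_apply]]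
  simp

end Nat

lemma prod_dvd_qTot {n k : ℕ} {f : Fin k → ℕ} (hf : ∀ j, f j ≠ 0) (hsum : ∑ j, f j ≤ n) :
    ∏ j, f j ∣ qTot n := by
  have hk : k ≤ ∑ j, f j := by
    simpa using Finset.card_nsmul_le_sum Finset.univ f 1 fun j _ =>
      Nat.one_le_iff_ne_zero.mpr (hf j)
  refine dvd_trans ?_ (Finset.dvd_lcm (Finset.mem_range.mpr (by omega : k < n + 1)))
  refine Finset.dvd_lcm (Finset.mem_biUnion.mpr ⟨∑ j, f j, Finset.mem_range.mpr (by omega), ?_⟩)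
  exact Finset.mem_filter.mpr ⟨Finset.Nat.mem_antidiagonalTuple.mpr rfl, hf⟩

lemma qTot_dvd {n m : ℕ}
    (h : ∀ k (f : Fin k → ℕ), (∀ j, f j ≠ 0) → ∑ j, f j ≤ n → ∏ j, f j ∣ m) :
    qTot n ∣ m := by
  refine Finset.lcm_dvd fun k _ => Finset.lcm_dvd fun f hf => ?_
  simp only [Finset.mem_biUnion, Finset.mem_filter, Finset.Nat.mem_antidiagonalTuple,
    Finset.mem_range] at hf
  obtain ⟨m, hm, rfl, hf⟩ := hf
  exact h k f hf (by omega)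

lemma pow_div_dvd_qTot (n : ℕ) {p : ℕ} (hp : p ≠ 0) : p ^ (n / p) ∣ qTot n := by
  simpa using prod_dvd_qTot (n := n) (f := fun _ : Fin (n / p) => p) (fun _ => hp)
    (by simpa using Nat.div_mul_le_self n p)

theorem padicValNat_qTot (n : ℕ) :
    (∀ p : ℕ, p.Prime → padicValNat p (qTot n) = n / p) ∧
      qTot n = ∏ p ∈ (Finset.range (n + 1)).filter Nat.Prime, p ^ (n / p) := by
  set R := ∏ p ∈ (Finset.range (n + 1)).filter Nat.Prime, p ^ (n / p)
  have hR0 : R ≠ 0 := Finset.prod_ne_zero_iff.mpr fun p hp =>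
    pow_ne_zero _ (Finset.mem_filter.mp hp).2.ne_zero
  have hR : ∀ p, p.Prime → R.factorization p = n / p := by
    intro p hp
    rw [Nat.factorization_prod_primes_pow (fun r hr => (Finset.mem_filter.mp hr).2)]
    split_ifs with hpR
    · rfl
    · simp_all [Nat.div_eq_of_lt]
  have hdvd : qTot n ∣ R := qTot_dvd fun k f hf hsum =>
    (Nat.factorization_prime_le_iff_dvd (Finset.prod_ne_zero_iff.mpr fun j _ => hf j) hR0).mp
      fun p hp => by
        rw [hR p hp, Nat.le_div_iff_mul_le hp.pos, mul_comm]
        exact (Nat.mul_factorization_prod_le_sum _ f p).trans hsum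
  have hq0 : qTot n ≠ 0 := ne_zero_of_dvd_ne_zero hR0 hdvd
  have hq : qTot n = R := Nat.dvd_antisymm hdvd <|
    (Nat.factorization_prime_le_iff_dvd hR0 hq0).mp fun p hp =>
      hR p hp ▸ (hp.pow_dvd_iff_le_factorization hq0).mp (pow_div_dvd_qTot n hp.ne_zero)
  refine ⟨fun p hp => ?_, hq⟩
  rw [← Nat.factorization_def _ hp, hq, hR p hp]
end
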